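/- The systems C^∨C_l^{(2)∗_s} and C^∨C_l^{(2)∗_l} are genuinely distinct: Both R(C^∨C_l^{(2)∗_s}) = (R(BC_l)_s + L_{0,0}) ∪ (R(C^∨C_l)_m + 2ℤa) ∪ (R(C^∨C_l)_l + 2ℤa) and R(C^∨C_l^{(2)∗_l}) = (R(C^∨C_l)_s + ℤa) ∪ (R(C^∨C_l)_m + 2ℤa) ∪ (R(BC_l)_l + L_{0,0}^{2,2}) are non-reduced elliptic root systems in (F,I) with marking ℝa whose quotient modulo ℝa is the image of R(C^∨C_l), and there is no linear automorphism φ of F with I(φ(x),φ(y)) = c·I(x,y) for some c > 0, φ(ℝa) = ℝa, and φ(R(C^∨C_l^{(2)∗_s})) = R(C^∨C_l^{(2)∗_l}). -/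

import Mathlib

open Pointwise

noncomputable section

/-- The ambient space `F = ℝ^{l+2}`, with coordinates `0,…,l-1` for the finite part
and coordinates `l, l+1` corresponding to the radical vectors `a, b`. -/
abbrev V (l : ℕ) : Type := Fin (l + 2) → ℝ

/-- The orthonormal vectors `ε_i`. -/
def εv (l : ℕ) (i : Fin l) : V l := Pi.single (Fin.castAdd 2 i) 1

/-- The radical vector `a`. -/
def av (l : ℕ) : V l := Pi.single (Fin.natAdd l (0 : Fin 2)) 1

/-- The radical vector `b`. -/
def bv (l : ℕ) : V l := Pi.single (Fin.natAdd l (1 : Fin 2)) 1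

/-- The positive semi-definite symmetric bilinear form `I` of signature `(l,2,0)`,
with radical `ℝa + ℝb`. -/
def Iform (l : ℕ) (x y : V l) : ℝ :=
  ∑ i : Fin l, x (Fin.castAdd 2 i) * y (Fin.castAdd 2 i)

/-- Short roots of the finite root system `BC_l`. -/
def BCs (l : ℕ) : Set (V l) := ⋃ i : Fin l, {εv l i, -εv l i}

/-- Middle-length roots of the finite root system `BC_l`. -/
def BCm (l : ℕ) : Set (V l) :=
  ⋃ (i : Fin l) (j : Fin l) (_ : i ≠ j),
    {εv l i + εv l j, εv l i - εv l j, -εv l i - εv l j}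

/-- Long roots of the finite root system `BC_l`. -/
def BCl (l : ℕ) : Set (V l) := ⋃ i : Fin l, {(2 : ℝ) • εv l i, -((2 : ℝ) • εv l i)}

/-- The finite root system `BC_l`. -/
def BCfull (l : ℕ) : Set (V l) := BCs l ∪ BCm l ∪ BCl l

/-- The subset `(kℤ)v` of `F`. -/
def Zv (l : ℕ) (k : ℤ) (v : V l) : Set (V l) := {x | ∃ n : ℤ, x = ((k * n : ℤ) : ℝ) • v}

/-- The subset `(kℤ)a`. -/
def Za (l : ℕ) (k : ℤ) : Set (V l) := Zv l k (av l)

/-- The subset `(kℤ)b`. -/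
def Zb (l : ℕ) (k : ℤ) : Set (V l) := Zv l k (bv l)

/-- The subset `(1+2ℤ)a`. -/
def oddZa (l : ℕ) : Set (V l) := {x | ∃ n : ℤ, x = ((1 + 2 * n : ℤ) : ℝ) • av l}

/-- The subset `L_{i,j}^{s1,s2} = {s2·m·a + s1·n·b : (m-i)(n-j) ≡ 0 mod 2}`;
`L_{i,j} = Lset l i j 1 1`. -/
def Lset (l : ℕ) (i j s1 s2 : ℤ) : Set (V l) :=
  {x | ∃ m n : ℤ, (2 : ℤ) ∣ ((m - i) * (n - j)) ∧
    x = ((s2 * m : ℤ) : ℝ) • av l + ((s1 * n : ℤ) : ℝ) • bv l}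

/-- The subset `{ma + 2nb : m ≡ n mod 2}` occurring in the ◇-type system. -/
def diaL (l : ℕ) : Set (V l) :=
  {x | ∃ m n : ℤ, (2 : ℤ) ∣ (m - n) ∧ x = ((m : ℤ) : ℝ) • av l + ((2 * n : ℤ) : ℝ) • bv l}

/-- The four types of non-reduced affine root systems. -/
inductive AffType | BCC | CvBC | BBv | CvC

/-- First tier number: the multiplier of `ℤb` on the middle part. -/
def tfm : AffType → ℤ | .BCC => 1 | .CvBC => 2 | .BBv => 1 | .CvC => 2

/-- The multiplier of `ℤb` on the long part. -/
def tfl : AffType → ℤ | .BCC => 1 | .CvBC => 4 | .BBv => 2 | .CvC => 2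

/-- Short part of the affine root system `R(X_l)`. -/
def AffS (l : ℕ) (_X : AffType) : Set (V l) := BCs l + Zb l 1

/-- Middle part of the affine root system `R(X_l)`. -/
def AffM (l : ℕ) (X : AffType) : Set (V l) := BCm l + Zb l (tfm X)

/-- Long part of the affine root system `R(X_l)`. -/
def AffL (l : ℕ) (X : AffType) : Set (V l) := BCl l + Zb l (tfl X)

/-- The affine root system `R(X_l)` for `X ∈ {BCC, C^∨BC, BB^∨, C^∨C}`. -/
def Aff (l : ℕ) (X : AffType) : Set (V l) := AffS l X ∪ AffM l X ∪ AffL l X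

/-- The reduced classical types `BC_l^{(1,2)}, BC_l^{(4,2)}, BC_l^{(2,2)σ}(1), BC_l^{(2,2)σ}(2)`
(for `X = BCC, C^∨BC, BB^∨, C^∨C` respectively). -/
def redClassical (l : ℕ) (X : AffType) : Set (V l) :=
  (AffS l X + Za l 1) ∪ (AffM l X + Za l 1) ∪ (AffL l X + oddZa l)

/-- `R(BC_l^{(1,1)∗})`. -/
def RBC11star (l : ℕ) : Set (V l) :=
  (AffS l .BCC + Za l 1) ∪ (AffM l .BCC + Za l 1) ∪ (BCl l + Lset l 1 1 1 1)

/-- `R(BC_l^{(4,4)∗})`. -/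
def RBC44star (l : ℕ) : Set (V l) :=
  (BCs l + Lset l 1 1 1 1) ∪ (AffM l .CvBC + Za l 2) ∪ (AffL l .CvBC + Za l 4)

/-- `R(X_l^{(1)})`. -/
def E1 (l : ℕ) (X : AffType) : Set (V l) := Aff l X + Za l 1

/-- `R(X_l^{(2)}(i))`. -/
def E2 (l : ℕ) (X : AffType) (i : ℤ) : Set (V l) :=
  (AffS l X + Za l 1) ∪ (AffM l X + Za l i) ∪ (AffL l X + Za l 2)

/-- `R(X_l^{(4)})`. -/
def E4 (l : ℕ) (X : AffType) : Set (V l) :=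
  (AffS l X + Za l 1) ∪ (AffM l X + Za l 2) ∪ (AffL l X + Za l 4)

/-- `R(BCC_l^{(1)∗})`-type systems: `BCC1star l 0 0 = R(BCC_l^{(1)∗_0})`,
`BCC1star l 0 1 = R(BCC_l^{(1)∗_{0'}})`, `BCC1star l 1 1 = R(BCC_l^{(1)∗_1}) = R(BC_l^{(1,1)∗})`. -/
def BCC1star (l : ℕ) (i j : ℤ) : Set (V l) :=
  (AffS l .BCC + Za l 1) ∪ (AffM l .BCC + Za l 1) ∪ (BCl l + Lset l i j 1 1)

/-- `R(BCC_l^{(2)∗_p})`. -/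
def BCC2star (l : ℕ) (p : ℤ) : Set (V l) :=
  (AffS l .BCC + Za l 1) ∪ (AffM l .BCC + Za l 2) ∪ (BCl l + Lset l p p 1 2)

/-- `R(C^∨BC_l^{(2)∗_p})`. -/
def CvBC2star (l : ℕ) (p : ℤ) : Set (V l) :=
  (BCs l + Lset l p p 1 1) ∪ (AffM l .CvBC + Za l 2) ∪ (AffL l .CvBC + Za l 2)

/-- `R(C^∨BC_l^{(4)∗})`-type systems: `CvBC4star l 0 0 = R(C^∨BC_l^{(4)∗_0})`,
`CvBC4star l 0 1 = R(C^∨BC_l^{(4)∗_{0'}})`, `CvBC4star l 1 1 = R(C^∨BC_l^{(4)∗_1}) = R(BC_l^{(4,4)∗})`. -/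
def CvBC4star (l : ℕ) (i j : ℤ) : Set (V l) :=
  (BCs l + Lset l i j 1 1) ∪ (AffM l .CvBC + Za l 2) ∪ (AffL l .CvBC + Za l 4)

/-- `R(BB_2^{∨(2)∗})` (its defining pattern, written for general `l`). -/
def BB2star (l : ℕ) : Set (V l) :=
  (BCs l + Za l 1 + Zb l 1) ∪ (BCm l + Lset l 0 0 1 1) ∪ (BCl l + Za l 2 + Zb l 2)

/-- `R(C^∨C_l^{(1)∗_p})`. -/
def CvC1star (l : ℕ) (p : ℤ) : Set (V l) :=
  (AffS l .CvC + Za l 1) ∪ (AffM l .CvC + Za l 1) ∪ (BCl l + Lset l p p 2 1)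

/-- `R(C^∨C_l^{(2)∗})`-type systems: `CvC2star l 0 0 = R(C^∨C_l^{(2)∗_0})`,
`CvC2star l 1 1 = R(C^∨C_l^{(2)∗_1})`, `CvC2star l 1 0 = R(C^∨C_l^{(2)∗_{1'}})`. -/
def CvC2star (l : ℕ) (i j : ℤ) : Set (V l) :=
  (BCs l + Lset l 0 0 1 1) ∪ (AffM l .CvC + Za l 2) ∪ (BCl l + Lset l i j 2 2)

/-- `R(C^∨C_l^{(2)∗_s})`. -/
def CvC2starS (l : ℕ) : Set (V l) :=
  (BCs l + Lset l 0 0 1 1) ∪ (AffM l .CvC + Za l 2) ∪ (AffL l .CvC + Za l 2)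

/-- `R(C^∨C_l^{(2)∗_l})`. -/
def CvC2starL (l : ℕ) : Set (V l) :=
  (AffS l .CvC + Za l 1) ∪ (AffM l .CvC + Za l 2) ∪ (BCl l + Lset l 0 0 2 2)

/-- `R(C^∨C_l^{(4)∗_p})`. -/
def CvC4star (l : ℕ) (p : ℤ) : Set (V l) :=
  (BCs l + Lset l p p 1 1) ∪ (AffM l .CvC + Za l 2) ∪ (AffL l .CvC + Za l 4)

/-- `R(C^∨C_l^{(2)◇})`. -/
def CvC2dia (l : ℕ) : Set (V l) :=
  (AffS l .CvC + Za l 1) ∪ (AffM l .CvC + Za l 1) ∪ (BCl l + diaL l)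

/-- The reflection `w_α`. -/
def reflV (l : ℕ) (α x : V l) : V l := x - (2 * Iform l x α / Iform l α α) • α

/-- A generalized root system in `(F, I)`; since `I` has signature `(l,2,0)`, this is
exactly an elliptic root system. -/
structure IsERS (l : ℕ) (R : Set (V l)) : Prop where
  /-- `R` is discrete. -/
  discrete : ∀ x ∈ R, ∃ ε > 0, ∀ y ∈ R, ‖x - y‖ < ε → y = x
  /-- The root lattice `Q(R)` is full in `F`. -/
  spans : Submodule.span ℝ R = ⊤
  /-- roots are non-isotropic. -/
  nonisotropic : ∀ α ∈ R, Iform l α α ≠ 0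
  /-- integrality: `2 I(α,β)/I(α,α) ∈ ℤ`. -/
  integral : ∀ α ∈ R, ∀ β ∈ R, ∃ n : ℤ, 2 * Iform l α β = (n : ℝ) * Iform l α α
  /-- each reflection `w_α` maps `R` onto `R`. -/
  reflects : ∀ α ∈ R, reflV l α '' R = R
  /-- irreducibility. -/
  irred : ∀ R1 R2 : Set (V l), R1 ∪ R2 = R →
    (∀ x ∈ R1, ∀ y ∈ R2, Iform l x y = 0) → R1 = ∅ ∨ R2 = ∅

/-- `R` is reduced. -/
def IsReducedRS (l : ℕ) (R : Set (V l)) : Prop := ∀ α ∈ R, (2 : ℝ) • α ∉ R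

/-- `R` is non-reduced. -/
def IsNonReducedRS (l : ℕ) (R : Set (V l)) : Prop := ∃ α ∈ R, (2 : ℝ) • α ∈ R

/-- The radical `ℝa + ℝb` of `I`. -/
def radSpan (l : ℕ) : Submodule ℝ (V l) := Submodule.span ℝ {av l, bv l}

/-- The marking line `G = ℝa`. -/
def Ga (l : ℕ) : Submodule ℝ (V l) := Submodule.span ℝ {av l}

/-- `G` is a marking of `R`: a one-dimensional subspace of `rad(I)` such that
`G ∩ Q(R)` is full in `G`. -/
def IsMarking (l : ℕ) (R : Set (V l)) (G : Submodule ℝ (V l)) : Prop :=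
  G ≤ radSpan l ∧ Module.finrank ℝ G = 1 ∧
    ∃ v : V l, v ≠ 0 ∧ v ∈ G ∧ v ∈ AddSubgroup.closure R

/-- `φ` rescales the form `I` by the factor `c`. -/
def IsSimilarity (l : ℕ) (φ : V l ≃ₗ[ℝ] V l) (c : ℝ) : Prop :=
  ∀ x y : V l, Iform l (φ x) (φ y) = c * Iform l x y

/-- Isomorphism of root systems in `(F, I)`. -/
def IsoRS (l : ℕ) (R R' : Set (V l)) : Prop :=
  ∃ (φ : V l ≃ₗ[ℝ] V l) (c : ℝ), 0 < c ∧ IsSimilarity l φ c ∧ φ '' R = R'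

/-- Isomorphism of marked root systems (with marking `ℝa` on both sides). -/
def IsoRSa (l : ℕ) (R R' : Set (V l)) : Prop :=
  ∃ (φ : V l ≃ₗ[ℝ] V l) (c : ℝ), 0 < c ∧ IsSimilarity l φ c ∧
    φ '' (Ga l : Set (V l)) = (Ga l : Set (V l)) ∧ φ '' R = R'

/-- The quotient `R/G` (image of `R` in `F/G`) is non-reduced. -/
def QuotNonReduced (l : ℕ) (R : Set (V l)) (G : Submodule ℝ (V l)) : Prop :=
  ∃ α ∈ R, ∃ β ∈ R, G.mkQ β = (2 : ℝ) • G.mkQ α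

/-- The quotient `R/G` is isomorphic, as an affine root system, to the affine root system
`X ⊆ span(ε_1,…,ε_l,b)`: encoded via `p = ψ ∘ (F → F/G)` for an isomorphism
`ψ : F/G ≅ span(ε_1,…,ε_l,b)` with `Ī(u,v) = c·I(ψu,ψv)` and `ψ(R/G) = X`. -/
def QuotIsType (l : ℕ) (R : Set (V l)) (G : Submodule ℝ (V l)) (X : Set (V l)) : Prop :=
  ∃ (p : V l →ₗ[ℝ] V l) (c : ℝ), 0 < c ∧
    LinearMap.ker p = G ∧
    LinearMap.range p = Submodule.span ℝ (Set.range (εv l) ∪ {bv l}) ∧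
    (∀ x y : V l, Iform l x y = c * Iform l (p x) (p y)) ∧
    p '' R = X

end

/-!
Both systems consist of vectors `β + m a + n b` with `β ∈ R(BC_l)` and `(m, n)` ranging over a
subset of `ℤ²` that depends only on the length of `β`. The reflection in `α + r a + s b` sends
`β + m a + n b` to `w_α β + (m - k r) a + (n - k s) b` with `k = 2 I(β, α) / I(α, α) ∈ ℤ`. In
both systems `k (r, s) ∈ 2ℤ²`, and `k (r, s) ∈ 4ℤ²` when `β` is long, while the admissible sets of
`(m, n)` are unions of cosets of these lattices; this gives closure under reflections. The other
axioms come from the integrality of all coordinates and from `ε_i`, `ε_i + ε_j` being roots.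

The two systems are not similar: in `C^∨C_l^{(2)∗_s}` the double of every root of minimal length
is a root, a property preserved by similarities, whereas in `C^∨C_l^{(2)∗_l}` the root
`ε_1 + a + b` has minimal length but `2ε_1 + 2a + 2b` is not a root, since `1 · 1` is odd.
-/

noncomputable section

variable {l : ℕ}

def radv (l : ℕ) (m n : ℤ) : V l := (m : ℝ) • av l + (n : ℝ) • bv l

lemma castAdd_ne_natAdd (i : Fin l) (j : Fin 2) : Fin.castAdd 2 i ≠ Fin.natAdd l j := by
  simp only [ne_eq, Fin.ext_iff, Fin.val_castAdd, Fin.val_natAdd]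
  omega

@[simp] lemma εv_castAdd (i j : Fin l) : εv l i (Fin.castAdd 2 j) = if j = i then 1 else 0 := by
  simp [εv, Pi.single_apply]

@[simp] lemma εv_natAdd (i : Fin l) (j : Fin 2) : εv l i (Fin.natAdd l j) = 0 :=
  Pi.single_eq_of_ne (castAdd_ne_natAdd i j).symm _

@[simp] lemma radv_castAdd (m n : ℤ) (i : Fin l) : radv l m n (Fin.castAdd 2 i) = 0 := by
  simp [radv, av, bv, castAdd_ne_natAdd]

@[simp] lemma radv_natAdd_zero (m n : ℤ) : radv l m n (Fin.natAdd l 0) = m := by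
  simp [radv, av, bv, Fin.ext_iff]

@[simp] lemma radv_natAdd_one (m n : ℤ) : radv l m n (Fin.natAdd l 1) = n := by
  simp [radv, av, bv, Fin.ext_iff]

lemma Iform_comm (x y : V l) : Iform l x y = Iform l y x := by
  simp [Iform, mul_comm]

@[simp] lemma Iform_add_left (x y z : V l) : Iform l (x + y) z = Iform l x z + Iform l y z := by
  simp [Iform, add_mul, Finset.sum_add_distrib]

@[simp] lemma Iform_add_right (x y z : V l) : Iform l x (y + z) = Iform l x y + Iform l x z := by
  simp [Iform, mul_add, Finset.sum_add_distrib]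

@[simp] lemma Iform_smul_left (c : ℝ) (x y : V l) : Iform l (c • x) y = c * Iform l x y := by
  simp [Iform, Finset.mul_sum, mul_assoc]

@[simp] lemma Iform_smul_right (c : ℝ) (x y : V l) : Iform l x (c • y) = c * Iform l x y := by
  simp [Iform, Finset.mul_sum, mul_left_comm]

@[simp] lemma Iform_neg_left (x y : V l) : Iform l (-x) y = -Iform l x y := by
  simp [Iform]

@[simp] lemma Iform_neg_right (x y : V l) : Iform l x (-y) = -Iform l x y := by
  simp [Iform]

@[simp] lemma Iform_sub_left (x y z : V l) : Iform l (x - y) z = Iform l x z - Iform l y z := by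
  simp [sub_eq_add_neg]

@[simp] lemma Iform_sub_right (x y z : V l) : Iform l x (y - z) = Iform l x y - Iform l x z := by
  simp [sub_eq_add_neg]

@[simp] lemma Iform_radv_left (m n : ℤ) (y : V l) : Iform l (radv l m n) y = 0 := by
  simp [Iform]

@[simp] lemma Iform_radv_right (m n : ℤ) (x : V l) : Iform l x (radv l m n) = 0 := by
  simp [Iform]

lemma Iform_add_radv (x y : V l) (m n p q : ℤ) :
    Iform l (x + radv l m n) (y + radv l p q) = Iform l x y := by
  simp

lemma Iform_εv_right (x : V l) (i : Fin l) : Iform l x (εv l i) = x (Fin.castAdd 2 i) := by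
  simp [Iform]

@[simp] lemma Iform_εv_εv (i j : Fin l) : Iform l (εv l i) (εv l j) = if i = j then 1 else 0 := by
  simp [Iform_εv_right, eq_comm]

lemma exists_Iform_εv_ne_zero {x : V l} (hx : Iform l x x ≠ 0) :
    ∃ i, Iform l x (εv l i) ≠ 0 := by
  by_contra! h
  simp only [Iform_εv_right] at h
  exact hx (by simp [Iform, h])

lemma mem_BCs_iff {x : V l} : x ∈ BCs l ↔ ∃ i, x = εv l i ∨ x = -εv l i := by
  simp [BCs]

lemma εv_mem_BCs (i : Fin l) : εv l i ∈ BCs l := mem_BCs_iff.2 ⟨i, Or.inl rfl⟩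

lemma neg_mem_BCs {x : V l} (hx : x ∈ BCs l) : -x ∈ BCs l := by
  obtain ⟨i, rfl | rfl⟩ := mem_BCs_iff.1 hx
  exacts [mem_BCs_iff.2 ⟨i, Or.inr rfl⟩, mem_BCs_iff.2 ⟨i, Or.inl (neg_neg _)⟩]

lemma Iform_self_of_mem_BCs {x : V l} (hx : x ∈ BCs l) : Iform l x x = 1 := by
  obtain ⟨i, rfl | rfl⟩ := mem_BCs_iff.1 hx <;> simp

lemma eq_or_eq_neg_or_Iform_eq_zero_of_mem_BCs {x y : V l} (hx : x ∈ BCs l) (hy : y ∈ BCs l) :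
    y = x ∨ y = -x ∨ Iform l x y = 0 := by
  obtain ⟨i, rfl | rfl⟩ := mem_BCs_iff.1 hx <;> obtain ⟨j, rfl | rfl⟩ := mem_BCs_iff.1 hy <;>
    obtain rfl | hij := eq_or_ne i j <;> simp [*]

lemma mem_BCm_iff {x : V l} :
    x ∈ BCm l ↔ ∃ u ∈ BCs l, ∃ v ∈ BCs l, Iform l u v = 0 ∧ x = u + v := by
  constructor
  · simp only [BCm, Set.mem_iUnion, Set.mem_insert_iff, Set.mem_singleton_iff]
    rintro ⟨i, j, hij, rfl | rfl | rfl⟩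
    · exact ⟨_, εv_mem_BCs i, _, εv_mem_BCs j, by simp [hij], rfl⟩
    · exact ⟨_, εv_mem_BCs i, _, neg_mem_BCs (εv_mem_BCs j), by simp [hij], sub_eq_add_neg _ _⟩
    · exact ⟨_, neg_mem_BCs (εv_mem_BCs i), _, neg_mem_BCs (εv_mem_BCs j), by simp [hij],
        sub_eq_add_neg _ _⟩
  · rintro ⟨u, hu, v, hv, huv, rfl⟩
    obtain ⟨i, rfl | rfl⟩ := mem_BCs_iff.1 hu <;> obtain ⟨j, rfl | rfl⟩ := mem_BCs_iff.1 hv <;>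
      obtain rfl | hij := eq_or_ne i j <;> simp at huv <;>
      simp only [BCm, Set.mem_iUnion, Set.mem_insert_iff, Set.mem_singleton_iff]
    · exact ⟨i, j, hij, Or.inl rfl⟩
    · exact ⟨i, j, hij, Or.inr (Or.inl (sub_eq_add_neg _ _).symm)⟩
    · exact ⟨j, i, hij.symm, Or.inr (Or.inl (by abel))⟩
    · exact ⟨i, j, hij, Or.inr (Or.inr (sub_eq_add_neg _ _).symm)⟩

lemma mem_BCl_iff {x : V l} : x ∈ BCl l ↔ ∃ u ∈ BCs l, x = (2 : ℝ) • u := by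
  constructor
  · simp only [BCl, Set.mem_iUnion, Set.mem_insert_iff, Set.mem_singleton_iff]
    rintro ⟨i, rfl | rfl⟩
    exacts [⟨_, εv_mem_BCs i, rfl⟩, ⟨_, neg_mem_BCs (εv_mem_BCs i), (smul_neg _ _).symm⟩]
  · rintro ⟨u, hu, rfl⟩
    simp only [BCl, Set.mem_iUnion, Set.mem_insert_iff, Set.mem_singleton_iff]
    obtain ⟨i, rfl | rfl⟩ := mem_BCs_iff.1 hu
    exacts [⟨i, Or.inl rfl⟩, ⟨i, Or.inr (smul_neg _ _)⟩]

def reflCoeff (l : ℕ) (α x : V l) : ℝ := 2 * Iform l x α / Iform l α α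

lemma reflV_add_right (α x y : V l) : reflV l α (x + y) = reflV l α x + reflV l α y := by
  simp only [reflV, Iform_add_left]
  rw [mul_add, add_div, add_smul]
  abel

lemma reflV_smul_right (c : ℝ) (α x : V l) : reflV l α (c • x) = c • reflV l α x := by
  simp only [reflV, Iform_smul_left, smul_sub, smul_smul]
  congr 2
  ring

lemma reflV_smul_left {c : ℝ} (hc : c ≠ 0) (α : V l) : reflV l (c • α) = reflV l α := by
  ext1 x
  simp only [reflV, Iform_smul_left, Iform_smul_right, smul_smul]
  by_cases hα : Iform l α α = 0
  · simp [hα]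
  · congr 2
    field_simp

lemma reflV_reflV {α : V l} (hα : Iform l α α ≠ 0) (x : V l) : reflV l α (reflV l α x) = x := by
  simp only [reflV, Iform_sub_left, Iform_smul_left]
  field_simp
  module

lemma Iform_reflV_reflV {α : V l} (hα : Iform l α α ≠ 0) (x y : V l) :
    Iform l (reflV l α x) (reflV l α y) = Iform l x y := by
  simp only [reflV, Iform_sub_left, Iform_sub_right, Iform_smul_left, Iform_smul_right,
    Iform_comm α y]
  field_simp
  ring

lemma mem_BCfull_iff {x : V l} : x ∈ BCfull l ↔ x ∈ BCs l ∨ x ∈ BCm l ∨ x ∈ BCl l := by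
  simp [BCfull, or_assoc]

lemma Iform_self_of_mem_BCm {x : V l} (hx : x ∈ BCm l) : Iform l x x = 2 := by
  obtain ⟨u, hu, v, hv, huv, rfl⟩ := mem_BCm_iff.1 hx
  norm_num [Iform_self_of_mem_BCs hu, Iform_self_of_mem_BCs hv, huv, Iform_comm v u]

lemma Iform_self_of_mem_BCl {x : V l} (hx : x ∈ BCl l) : Iform l x x = 4 := by
  obtain ⟨u, hu, rfl⟩ := mem_BCl_iff.1 hx
  norm_num [Iform_self_of_mem_BCs hu]

lemma one_le_Iform_self_of_mem_BCfull {x : V l} (hx : x ∈ BCfull l) : 1 ≤ Iform l x x := by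
  rcases mem_BCfull_iff.1 hx with h | h | h
  · rw [Iform_self_of_mem_BCs h]
  · rw [Iform_self_of_mem_BCm h]; norm_num
  · rw [Iform_self_of_mem_BCl h]; norm_num

lemma reflV_mem_BCs_of_mem_BCs {α e : V l} (hα : α ∈ BCs l) (he : e ∈ BCs l) :
    reflV l α e ∈ BCs l := by
  rcases eq_or_eq_neg_or_Iform_eq_zero_of_mem_BCs hα he with rfl | rfl | h
  · convert neg_mem_BCs hα using 1
    simp only [reflV, Iform_self_of_mem_BCs hα]
    module
  · convert hα using 1
    simp only [reflV, Iform_neg_left, Iform_self_of_mem_BCs hα]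
    module
  · simpa [reflV, Iform_comm e α, h] using he

/-- The reflection in `u + v` exchanges `u` with `-v` and `v` with `-u`, and fixes every vector
orthogonal to both. -/
lemma reflV_mem_BCs_of_mem_BCm {α e : V l} (hα : α ∈ BCm l) (he : e ∈ BCs l) :
    reflV l α e ∈ BCs l := by
  obtain ⟨u, hu, v, hv, huv, rfl⟩ := mem_BCm_iff.1 hα
  have hα2 := Iform_self_of_mem_BCm hα
  rcases eq_or_eq_neg_or_Iform_eq_zero_of_mem_BCs he hu with rfl | rfl | heu
  · convert neg_mem_BCs hv using 1
    simp only [reflV, hα2, Iform_add_right, Iform_self_of_mem_BCs he, huv]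
    module
  · have hev : Iform l e v = 0 := by simpa using huv
    convert hv using 1
    simp only [reflV, hα2, Iform_add_right, Iform_neg_right, Iform_self_of_mem_BCs he, hev]
    module
  rcases eq_or_eq_neg_or_Iform_eq_zero_of_mem_BCs he hv with rfl | rfl | hev
  · convert neg_mem_BCs hu using 1
    simp only [reflV, hα2, Iform_add_right, Iform_self_of_mem_BCs he, heu]
    module
  · convert hu using 1
    simp only [reflV, hα2, Iform_add_right, Iform_neg_right, Iform_self_of_mem_BCs he, heu]
    module
  · simpa [reflV, heu, hev] using he

lemma reflV_mem_BCs {α e : V l} (hα : α ∈ BCfull l) (he : e ∈ BCs l) :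
    reflV l α e ∈ BCs l := by
  rcases mem_BCfull_iff.1 hα with h | h | h
  · exact reflV_mem_BCs_of_mem_BCs h he
  · exact reflV_mem_BCs_of_mem_BCm h he
  · obtain ⟨u, hu, rfl⟩ := mem_BCl_iff.1 h
    rw [reflV_smul_left two_ne_zero]
    exact reflV_mem_BCs_of_mem_BCs hu he

lemma reflV_mem_BCm {α x : V l} (hα : α ∈ BCfull l) (hx : x ∈ BCm l) :
    reflV l α x ∈ BCm l := by
  obtain ⟨u, hu, v, hv, huv, rfl⟩ := mem_BCm_iff.1 hx
  have hαα : Iform l α α ≠ 0 := (one_pos.trans_le (one_le_Iform_self_of_mem_BCfull hα)).ne'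
  exact mem_BCm_iff.2 ⟨_, reflV_mem_BCs hα hu, _, reflV_mem_BCs hα hv,
    by rw [Iform_reflV_reflV hαα, huv], reflV_add_right α u v⟩

lemma reflV_mem_BCl {α x : V l} (hα : α ∈ BCfull l) (hx : x ∈ BCl l) :
    reflV l α x ∈ BCl l := by
  obtain ⟨u, hu, rfl⟩ := mem_BCl_iff.1 hx
  exact mem_BCl_iff.2 ⟨_, reflV_mem_BCs hα hu, reflV_smul_right 2 α u⟩

lemma apply_natAdd_of_mem_BCfull {x : V l} (hx : x ∈ BCfull l) (j : Fin 2) :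
    x (Fin.natAdd l j) = 0 := by
  have hs {u : V l} (hu : u ∈ BCs l) : u (Fin.natAdd l j) = 0 := by
    obtain ⟨i, rfl | rfl⟩ := mem_BCs_iff.1 hu <;> simp
  rcases mem_BCfull_iff.1 hx with h | h | h
  · exact hs h
  · obtain ⟨u, hu, v, hv, -, rfl⟩ := mem_BCm_iff.1 h
    simp [hs hu, hs hv]
  · obtain ⟨u, hu, rfl⟩ := mem_BCl_iff.1 h
    simp [hs hu]

lemma εv_add_εv_mem_BCm {i j : Fin l} (hij : i ≠ j) : εv l i + εv l j ∈ BCm l :=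
  mem_BCm_iff.2 ⟨_, εv_mem_BCs i, _, εv_mem_BCs j, by simp [hij], rfl⟩

lemma two_smul_εv_mem_BCl (i : Fin l) : (2 : ℝ) • εv l i ∈ BCl l :=
  mem_BCl_iff.2 ⟨_, εv_mem_BCs i, rfl⟩

def intVecs (l : ℕ) : AddSubgroup (V l) :=
  AddSubgroup.pi Set.univ fun _ => (Int.castAddHom ℝ).range

lemma mem_intVecs {x : V l} : x ∈ intVecs l ↔ ∀ t, ∃ z : ℤ, (z : ℝ) = x t := by
  simp only [intVecs, AddSubgroup.mem_pi, Set.mem_univ, true_implies, AddMonoidHom.mem_range,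
    Int.coe_castAddHom]

lemma eq_zero_of_mem_intVecs_of_norm_lt_one {x : V l} (hx : x ∈ intVecs l) (h : ‖x‖ < 1) :
    x = 0 := by
  funext t
  obtain ⟨z, hz⟩ := mem_intVecs.1 hx t
  have hz1 : |(z : ℝ)| < 1 := by
    rw [hz, ← Real.norm_eq_abs]
    exact (norm_le_pi_norm x t).trans_lt h
  rw [← hz, (Int.abs_lt_one_iff (a := z)).1 (by exact_mod_cast hz1), Int.cast_zero, Pi.zero_apply]

lemma exists_Iform_eq_intCast {x y : V l} (hx : x ∈ intVecs l) (hy : y ∈ intVecs l) :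
    ∃ z : ℤ, Iform l x y = z := by
  choose zx hzx using mem_intVecs.1 hx
  choose zy hzy using mem_intVecs.1 hy
  exact ⟨∑ i, zx (Fin.castAdd 2 i) * zy (Fin.castAdd 2 i), by simp [Iform, ← hzx, ← hzy]⟩

lemma single_one_mem_intVecs (t : Fin (l + 2)) : Pi.single t (1 : ℝ) ∈ intVecs l :=
  mem_intVecs.2 fun s => by
    rcases eq_or_ne s t with rfl | h
    exacts [⟨1, by simp⟩, ⟨0, by simp [h]⟩]

lemma radv_mem_intVecs (m n : ℤ) : radv l m n ∈ intVecs l := by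
  simp only [radv, Int.cast_smul_eq_zsmul]
  exact add_mem (zsmul_mem (single_one_mem_intVecs _) m) (zsmul_mem (single_one_mem_intVecs _) n)

lemma mem_intVecs_of_mem_BCs {x : V l} (hx : x ∈ BCs l) : x ∈ intVecs l := by
  obtain ⟨i, rfl | rfl⟩ := mem_BCs_iff.1 hx
  exacts [single_one_mem_intVecs _, neg_mem (single_one_mem_intVecs _)]

lemma mem_intVecs_of_mem_BCfull {x : V l} (hx : x ∈ BCfull l) : x ∈ intVecs l := by
  rcases mem_BCfull_iff.1 hx with h | h | h
  · exact mem_intVecs_of_mem_BCs h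
  · obtain ⟨u, hu, v, hv, -, rfl⟩ := mem_BCm_iff.1 h
    exact add_mem (mem_intVecs_of_mem_BCs hu) (mem_intVecs_of_mem_BCs hv)
  · obtain ⟨u, hu, rfl⟩ := mem_BCl_iff.1 h
    rw [two_smul]
    exact add_mem (mem_intVecs_of_mem_BCs hu) (mem_intVecs_of_mem_BCs hu)

lemma exists_reflCoeff_eq_intCast {α x : V l} (hα : α ∈ BCfull l) (hx : x ∈ intVecs l) :
    ∃ k : ℤ, reflCoeff l α x = k ∧ (α ∈ BCs l → 2 ∣ k) := by
  by_cases hs : α ∈ BCs l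
  · obtain ⟨z, hz⟩ := exists_Iform_eq_intCast hx (mem_intVecs_of_mem_BCs hs)
    exact ⟨2 * z, by simp [reflCoeff, Iform_self_of_mem_BCs hs, hz], fun _ => dvd_mul_right 2 z⟩
  refine (?_ : ∃ k : ℤ, reflCoeff l α x = k).imp fun k hk => ⟨hk, fun h => absurd h hs⟩
  rcases (mem_BCfull_iff.1 hα).resolve_left hs with h | h
  · obtain ⟨z, hz⟩ := exists_Iform_eq_intCast hx (mem_intVecs_of_mem_BCfull hα)
    exact ⟨z, by simp [reflCoeff, Iform_self_of_mem_BCm h, hz]⟩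
  · obtain ⟨u, hu, rfl⟩ := mem_BCl_iff.1 h
    obtain ⟨z, hz⟩ := exists_Iform_eq_intCast hx (mem_intVecs_of_mem_BCs hu)
    exact ⟨z, by simp [reflCoeff, Iform_self_of_mem_BCs hu, hz]; ring⟩

lemma reflCoeff_smul_right (c : ℝ) (α x : V l) : reflCoeff l α (c • x) = c * reflCoeff l α x := by
  simp only [reflCoeff, Iform_smul_left]
  ring

lemma reflV_add_radv {aa xx : V l} {k : ℤ} (hk : reflCoeff l aa xx = k) (p q m n : ℤ) :
    reflV l (aa + radv l p q) (xx + radv l m n) =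
      reflV l aa xx + radv l (m - k * p) (n - k * q) := by
  have hk' : 2 * Iform l xx aa / Iform l aa aa = k := hk
  rw [reflV, reflV, Iform_add_radv, Iform_add_radv, hk']
  simp only [radv]
  push_cast
  module

lemma exists_reflCoeff_eq_intCast_of_mem_BCfull {α x : V l} (hα : α ∈ BCfull l)
    (hx : x ∈ BCfull l) :
    ∃ k : ℤ, reflCoeff l α x = k ∧ (α ∈ BCs l → 2 ∣ k) ∧
      (x ∈ BCl l → 2 ∣ k ∧ (α ∈ BCs l → 4 ∣ k)) := by
  by_cases hxl : x ∈ BCl l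
  · obtain ⟨y, hy, rfl⟩ := mem_BCl_iff.1 hxl
    obtain ⟨k, hk, hks⟩ := exists_reflCoeff_eq_intCast hα (mem_intVecs_of_mem_BCs hy)
    refine ⟨2 * k, by rw [reflCoeff_smul_right, hk]; push_cast; ring,
      fun _ => dvd_mul_right 2 k, fun _ => ⟨dvd_mul_right 2 k, fun hs => ?_⟩⟩
    simpa using mul_dvd_mul_left 2 (hks hs)
  · obtain ⟨k, hk, hks⟩ := exists_reflCoeff_eq_intCast hα (mem_intVecs_of_mem_BCfull hx)
    exact ⟨k, hk, hks, fun h => absurd h hxl⟩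

lemma mem_add_Zb {A : Set (V l)} {k : ℤ} {x : V l} :
    x ∈ A + Zb l k ↔ ∃ aa ∈ A, ∃ n : ℤ, x = aa + radv l 0 (k * n) := by
  simp only [Set.mem_add, Zb, Zv]
  constructor
  · rintro ⟨aa, haa, _, ⟨n, rfl⟩, rfl⟩
    exact ⟨aa, haa, n, by simp [radv]⟩
  · rintro ⟨aa, haa, n, rfl⟩
    exact ⟨aa, haa, _, ⟨n, rfl⟩, by simp [radv]⟩

lemma mem_add_Zb_add_Za {A : Set (V l)} {k k' : ℤ} {x : V l} :
    x ∈ A + Zb l k + Za l k' ↔ ∃ aa ∈ A, ∃ m n : ℤ, x = aa + radv l (k' * m) (k * n) := by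
  simp only [Set.mem_add, Zb, Za, Zv]
  constructor
  · rintro ⟨_, ⟨aa, haa, _, ⟨n, rfl⟩, rfl⟩, _, ⟨m, rfl⟩, rfl⟩
    exact ⟨aa, haa, m, n, by simp only [radv]; module⟩
  · rintro ⟨aa, haa, m, n, rfl⟩
    exact ⟨_, ⟨aa, haa, _, ⟨n, rfl⟩, rfl⟩, _, ⟨m, rfl⟩, by simp only [radv]; module⟩

lemma mem_add_Lset {A : Set (V l)} {i j s₁ s₂ : ℤ} {x : V l} :
    x ∈ A + Lset l i j s₁ s₂ ↔
      ∃ aa ∈ A, ∃ m n : ℤ, 2 ∣ (m - i) * (n - j) ∧ x = aa + radv l (s₂ * m) (s₁ * n) := by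
  simp only [Set.mem_add, Lset, radv]
  constructor
  · rintro ⟨aa, haa, _, ⟨m, n, hmn, rfl⟩, rfl⟩
    exact ⟨aa, haa, m, n, hmn, rfl⟩
  · rintro ⟨aa, haa, m, n, hmn, rfl⟩
    exact ⟨aa, haa, _, ⟨m, n, hmn, rfl⟩, rfl⟩

lemma εv_add_radv_mem_BCs_add_Lset (i : Fin l) {m n : ℤ} (h : 2 ∣ m * n) :
    εv l i + radv l m n ∈ BCs l + Lset l 0 0 1 1 :=
  mem_add_Lset.2 ⟨_, εv_mem_BCs i, m, n, by simpa using h, by simp⟩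

lemma mem_CvC2starS {x : V l} :
    x ∈ CvC2starS l ↔
      (∃ aa ∈ BCs l, ∃ m n : ℤ, 2 ∣ m * n ∧ x = aa + radv l m n) ∨
      (∃ aa ∈ BCm l, ∃ m n : ℤ, x = aa + radv l (2 * m) (2 * n)) ∨
      (∃ aa ∈ BCl l, ∃ m n : ℤ, x = aa + radv l (2 * m) (2 * n)) := by
  simp [CvC2starS, AffM, AffL, tfm, tfl, mem_add_Zb_add_Za, mem_add_Lset, or_assoc]

lemma mem_CvC2starL {x : V l} :
    x ∈ CvC2starL l ↔
      (∃ aa ∈ BCs l, ∃ m n : ℤ, x = aa + radv l m n) ∨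
      (∃ aa ∈ BCm l, ∃ m n : ℤ, x = aa + radv l (2 * m) (2 * n)) ∨
      (∃ aa ∈ BCl l, ∃ m n : ℤ, 2 ∣ m * n ∧ x = aa + radv l (2 * m) (2 * n)) := by
  simp [CvC2starL, AffS, AffM, tfm, mem_add_Zb_add_Za, mem_add_Lset, or_assoc]

lemma mem_Aff_CvC {x : V l} :
    x ∈ Aff l .CvC ↔
      (∃ aa ∈ BCs l, ∃ n : ℤ, x = aa + radv l 0 n) ∨
      (∃ aa ∈ BCm l, ∃ n : ℤ, x = aa + radv l 0 (2 * n)) ∨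
      (∃ aa ∈ BCl l, ∃ n : ℤ, x = aa + radv l 0 (2 * n)) := by
  simp [Aff, AffS, AffM, AffL, tfm, tfl, mem_add_Zb, or_assoc]

lemma span_eq_top_of_mem {S : Submodule ℝ (V l)} (hε : ∀ i, εv l i ∈ S) (ha : av l ∈ S)
    (hb : bv l ∈ S) : S = ⊤ := by
  rw [eq_top_iff, ← (Pi.basisFun ℝ (Fin (l + 2))).span_eq, Submodule.span_le]
  rintro _ ⟨t, rfl⟩
  rw [Pi.basisFun_apply]
  induction t using Fin.addCases with
  | left i => exact hε i
  | right j => fin_cases j; exacts [ha, hb]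

lemma irred_of_forall_Iform_self_ne_zero {R : Set (V l)} (hiso : ∀ x ∈ R, Iform l x x ≠ 0)
    (hε : ∀ i, εv l i ∈ R) (hεε : ∀ i j, i ≠ j → εv l i + εv l j ∈ R) (R₁ R₂ : Set (V l))
    (hR : R₁ ∪ R₂ = R) (horth : ∀ x ∈ R₁, ∀ y ∈ R₂, Iform l x y = 0) : R₁ = ∅ ∨ R₂ = ∅ := by
  have mem₁ : ∀ x ∈ R₁, ∀ y ∈ R, Iform l x y ≠ 0 → y ∈ R₁ := fun x hx y hy hxy =>
    (hR ▸ hy : y ∈ R₁ ∪ R₂).resolve_right fun h => hxy (horth x hx y h)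
  have mem₂ : ∀ x ∈ R₂, ∀ y ∈ R, Iform l x y ≠ 0 → y ∈ R₂ := fun x hx y hy hxy =>
    (hR ▸ hy : y ∈ R₁ ∪ R₂).resolve_left fun h => hxy (by rw [Iform_comm, horth y h x hx])
  simp only [← Set.not_nonempty_iff_eq_empty, ← not_and_or]
  rintro ⟨⟨x, hx⟩, ⟨y, hy⟩⟩
  obtain ⟨i, hi⟩ := exists_Iform_εv_ne_zero (hiso x (hR ▸ Or.inl hx))
  obtain ⟨j, hj⟩ := exists_Iform_εv_ne_zero (hiso y (hR ▸ Or.inr hy))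
  have hi₁ := mem₁ x hx _ (hε i) hi
  have hj₂ := mem₂ y hy _ (hε j) hj
  have hij : i ≠ j := by rintro rfl; simpa using horth _ hi₁ _ hj₂
  rcases (hR ▸ hεε i j hij : εv l i + εv l j ∈ R₁ ∪ R₂) with h | h
  · simpa [hij] using horth _ h _ hj₂
  · simpa [hij] using horth _ hi₁ _ h

def LiesOverBC (l : ℕ) (R : Set (V l)) : Prop :=
  ∀ x ∈ R, ∃ aa ∈ BCfull l, ∃ m n : ℤ, x = aa + radv l m n

namespace LiesOverBC

variable {R : Set (V l)}

lemma mem_intVecs (hR : LiesOverBC l R) {x : V l} (hx : x ∈ R) : x ∈ intVecs l := by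
  obtain ⟨aa, haa, m, n, rfl⟩ := hR x hx
  exact add_mem (mem_intVecs_of_mem_BCfull haa) (radv_mem_intVecs m n)

lemma one_le_Iform_self (hR : LiesOverBC l R) {x : V l} (hx : x ∈ R) : 1 ≤ Iform l x x := by
  obtain ⟨aa, haa, m, n, rfl⟩ := hR x hx
  simpa using one_le_Iform_self_of_mem_BCfull haa

lemma Iform_self_ne_zero (hR : LiesOverBC l R) {x : V l} (hx : x ∈ R) : Iform l x x ≠ 0 :=
  (one_pos.trans_le (hR.one_le_Iform_self hx)).ne'

lemma isERS (hR : LiesOverBC l R) (hl : 1 ≤ l) (hrefl : ∀ α ∈ R, ∀ x ∈ R, reflV l α x ∈ R)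
    (hshort : BCs l + Lset l 0 0 1 1 ⊆ R) (hmid : BCm l ⊆ R) : IsERS l R := by
  have hε i : εv l i ∈ R := by
    simpa [radv] using hshort (εv_add_radv_mem_BCs_add_Lset i (m := 0) (n := 0) (by simp))
  have hrad {m n : ℤ} (h : 2 ∣ m * n) : radv l m n ∈ Submodule.span ℝ R := by
    simpa using Submodule.sub_mem _
      (Submodule.subset_span (hshort (εv_add_radv_mem_BCs_add_Lset ⟨0, hl⟩ h)))
      (Submodule.subset_span (hε ⟨0, hl⟩))
  refine ⟨fun x hx => ⟨1, one_pos, fun y hy h => ?_⟩, ?_, fun α hα => hR.Iform_self_ne_zero hα,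
    fun α hα β hβ => ?_, fun α hα => ?_, irred_of_forall_Iform_self_ne_zero
      (fun x hx => hR.Iform_self_ne_zero hx) hε fun i j hij => hmid (εv_add_εv_mem_BCm hij)⟩
  · exact (sub_eq_zero.1 (eq_zero_of_mem_intVecs_of_norm_lt_one
      (sub_mem (hR.mem_intVecs hx) (hR.mem_intVecs hy)) h)).symm
  · refine span_eq_top_of_mem (fun i => Submodule.subset_span (hε i)) ?_ ?_
    · simpa [radv] using Submodule.smul_mem _ (1 / 2 : ℝ) (hrad (m := 2) (n := 0) (by simp))
    · simpa [radv] using Submodule.smul_mem _ (1 / 2 : ℝ) (hrad (m := 0) (n := 2) (by simp))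
  · obtain ⟨aa, haa, p, q, rfl⟩ := hR α hα
    obtain ⟨bb, hbb, m, n, rfl⟩ := hR β hβ
    obtain ⟨k, hk, -⟩ := exists_reflCoeff_eq_intCast haa (mem_intVecs_of_mem_BCfull hbb)
    have hI : Iform l aa aa ≠ 0 := by simpa using hR.Iform_self_ne_zero hα
    refine ⟨k, ?_⟩
    rw [Iform_add_radv, Iform_add_radv, ← hk, reflCoeff, Iform_comm aa bb]
    field_simp
  · refine Set.Subset.antisymm (Set.image_subset_iff.2 fun x hx => hrefl α hα x hx) fun x hx => ?_
    exact ⟨reflV l α x, hrefl α hα x hx, reflV_reflV (hR.Iform_self_ne_zero hα) x⟩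

end LiesOverBC

lemma two_dvd_sub_mul_sub {m n : ℤ} (h : 2 ∣ m * n) (u v : ℤ) :
    2 ∣ (m - 2 * u) * (n - 2 * v) := by
  have : (m - 2 * u) * (n - 2 * v) = m * n - 2 * (u * n + m * v - 2 * u * v) := by ring
  rw [this]
  exact dvd_sub h (dvd_mul_right 2 _)

lemma exists_reflV_add_radv_eq {aa xx : V l} (haa : aa ∈ BCfull l) (hxx : xx ∈ BCfull l)
    {p q : ℤ} (hpq : aa ∈ BCs l ∨ 2 ∣ p ∧ 2 ∣ q) (m n : ℤ) :
    ∃ u v : ℤ, reflV l (aa + radv l p q) (xx + radv l m n) =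
      reflV l aa xx + radv l (m - 2 * u) (n - 2 * v) ∧ (xx ∈ BCl l → 2 ∣ u ∧ 2 ∣ v) := by
  obtain ⟨k, hk, hks, hkl⟩ := exists_reflCoeff_eq_intCast_of_mem_BCfull haa hxx
  rw [reflV_add_radv hk]
  rcases hpq with hs | ⟨⟨p, rfl⟩, ⟨q, rfl⟩⟩
  · obtain ⟨k, rfl⟩ := hks hs
    refine ⟨k * p, k * q, by ring_nf, fun hx => ?_⟩
    have hk2 : 2 ∣ k := by have := (hkl hx).2 hs; omega
    exact ⟨hk2.mul_right p, hk2.mul_right q⟩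
  · exact ⟨k * p, k * q, by ring_nf, fun hx => ⟨(hkl hx).1.mul_right p, (hkl hx).1.mul_right q⟩⟩

lemma exists_of_mem_CvC2starS {α : V l} (hα : α ∈ CvC2starS l) :
    ∃ aa ∈ BCfull l, ∃ p q : ℤ, (aa ∈ BCs l ∨ 2 ∣ p ∧ 2 ∣ q) ∧ α = aa + radv l p q := by
  rcases mem_CvC2starS.1 hα with ⟨aa, h, p, q, -, rfl⟩ | ⟨aa, h, p, q, rfl⟩ | ⟨aa, h, p, q, rfl⟩
  · exact ⟨aa, Or.inl (Or.inl h), p, q, Or.inl h, rfl⟩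
  · exact ⟨aa, Or.inl (Or.inr h), _, _, Or.inr ⟨dvd_mul_right 2 p, dvd_mul_right 2 q⟩, rfl⟩
  · exact ⟨aa, Or.inr h, _, _, Or.inr ⟨dvd_mul_right 2 p, dvd_mul_right 2 q⟩, rfl⟩

lemma exists_of_mem_CvC2starL {α : V l} (hα : α ∈ CvC2starL l) :
    ∃ aa ∈ BCfull l, ∃ p q : ℤ, (aa ∈ BCs l ∨ 2 ∣ p ∧ 2 ∣ q) ∧ α = aa + radv l p q := by
  rcases mem_CvC2starL.1 hα with ⟨aa, h, p, q, rfl⟩ | ⟨aa, h, p, q, rfl⟩ | ⟨aa, h, p, q, -, rfl⟩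
  · exact ⟨aa, Or.inl (Or.inl h), p, q, Or.inl h, rfl⟩
  · exact ⟨aa, Or.inl (Or.inr h), _, _, Or.inr ⟨dvd_mul_right 2 p, dvd_mul_right 2 q⟩, rfl⟩
  · exact ⟨aa, Or.inr h, _, _, Or.inr ⟨dvd_mul_right 2 p, dvd_mul_right 2 q⟩, rfl⟩

lemma liesOverBC_CvC2starS : LiesOverBC l (CvC2starS l) := fun _ hx =>
  let ⟨aa, haa, p, q, _, h⟩ := exists_of_mem_CvC2starS hx
  ⟨aa, haa, p, q, h⟩

lemma liesOverBC_CvC2starL : LiesOverBC l (CvC2starL l) := fun _ hx =>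
  let ⟨aa, haa, p, q, _, h⟩ := exists_of_mem_CvC2starL hx
  ⟨aa, haa, p, q, h⟩

lemma reflV_mem_CvC2starS {α x : V l} (hα : α ∈ CvC2starS l) (hx : x ∈ CvC2starS l) :
    reflV l α x ∈ CvC2starS l := by
  obtain ⟨aa, haa, p, q, hpq, rfl⟩ := exists_of_mem_CvC2starS hα
  rcases mem_CvC2starS.1 hx with ⟨xx, hxx, m, n, hmn, rfl⟩ | ⟨xx, hxx, m, n, rfl⟩ |
    ⟨xx, hxx, m, n, rfl⟩
  · obtain ⟨u, v, h, -⟩ := exists_reflV_add_radv_eq haa (Or.inl (Or.inl hxx)) hpq m n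
    exact mem_CvC2starS.2 (Or.inl ⟨_, reflV_mem_BCs haa hxx, _, _, two_dvd_sub_mul_sub hmn u v, h⟩)
  · obtain ⟨u, v, h, -⟩ := exists_reflV_add_radv_eq haa (Or.inl (Or.inr hxx)) hpq (2 * m) (2 * n)
    exact mem_CvC2starS.2 (Or.inr (Or.inl ⟨_, reflV_mem_BCm haa hxx, m - u, n - v,
      by rw [h, mul_sub, mul_sub]⟩))
  · obtain ⟨u, v, h, -⟩ := exists_reflV_add_radv_eq haa (Or.inr hxx) hpq (2 * m) (2 * n)
    exact mem_CvC2starS.2 (Or.inr (Or.inr ⟨_, reflV_mem_BCl haa hxx, m - u, n - v,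
      by rw [h, mul_sub, mul_sub]⟩))

lemma reflV_mem_CvC2starL {α x : V l} (hα : α ∈ CvC2starL l) (hx : x ∈ CvC2starL l) :
    reflV l α x ∈ CvC2starL l := by
  obtain ⟨aa, haa, p, q, hpq, rfl⟩ := exists_of_mem_CvC2starL hα
  rcases mem_CvC2starL.1 hx with ⟨xx, hxx, m, n, rfl⟩ | ⟨xx, hxx, m, n, rfl⟩ |
    ⟨xx, hxx, m, n, hmn, rfl⟩
  · obtain ⟨u, v, h, -⟩ := exists_reflV_add_radv_eq haa (Or.inl (Or.inl hxx)) hpq m n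
    exact mem_CvC2starL.2 (Or.inl ⟨_, reflV_mem_BCs haa hxx, _, _, h⟩)
  · obtain ⟨u, v, h, -⟩ := exists_reflV_add_radv_eq haa (Or.inl (Or.inr hxx)) hpq (2 * m) (2 * n)
    exact mem_CvC2starL.2 (Or.inr (Or.inl ⟨_, reflV_mem_BCm haa hxx, m - u, n - v,
      by rw [h, mul_sub, mul_sub]⟩))
  · obtain ⟨_, _, h, huv⟩ := exists_reflV_add_radv_eq haa (Or.inr hxx) hpq (2 * m) (2 * n)
    obtain ⟨⟨u, rfl⟩, ⟨v, rfl⟩⟩ := huv hxx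
    exact mem_CvC2starL.2 (Or.inr (Or.inr ⟨_, reflV_mem_BCl haa hxx, m - 2 * u, n - 2 * v,
      two_dvd_sub_mul_sub hmn u v, by rw [h, mul_sub 2 m, mul_sub 2 n]⟩))

lemma BCs_add_Lset_subset_CvC2starS : BCs l + Lset l 0 0 1 1 ⊆ CvC2starS l :=
  Set.subset_union_left.trans Set.subset_union_left

lemma BCs_add_Lset_subset_CvC2starL : BCs l + Lset l 0 0 1 1 ⊆ CvC2starL l := fun x hx => by
  obtain ⟨aa, haa, m, n, -, rfl⟩ := mem_add_Lset.1 hx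
  exact mem_CvC2starL.2 (Or.inl ⟨aa, haa, m, n, by simp⟩)

lemma BCm_subset_CvC2starS : BCm l ⊆ CvC2starS l := fun x hx =>
  mem_CvC2starS.2 (Or.inr (Or.inl ⟨x, hx, 0, 0, by simp [radv]⟩))

lemma BCm_subset_CvC2starL : BCm l ⊆ CvC2starL l := fun x hx =>
  mem_CvC2starL.2 (Or.inr (Or.inl ⟨x, hx, 0, 0, by simp [radv]⟩))

lemma BCs_subset_CvC2starS : BCs l ⊆ CvC2starS l := fun x hx =>
  mem_CvC2starS.2 (Or.inl ⟨x, hx, 0, 0, by simp, by simp [radv]⟩)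

lemma isMarking_Ga_of_subset {R : Set (V l)} (hl : 1 ≤ l) (hshort : BCs l + Lset l 0 0 1 1 ⊆ R) :
    IsMarking l R (Ga l) := by
  have hav : av l ≠ 0 := by simp [av]
  refine ⟨Submodule.span_mono (Set.singleton_subset_iff.2 (Set.mem_insert _ _)),
    finrank_span_singleton hav, (2 : ℝ) • av l, by simp [hav],
    Submodule.smul_mem _ _ (Submodule.mem_span_singleton_self _), ?_⟩
  have h₀ := hshort (εv_add_radv_mem_BCs_add_Lset ⟨0, hl⟩ (m := 0) (n := 0) (by simp))
  have h₂ := hshort (εv_add_radv_mem_BCs_add_Lset ⟨0, hl⟩ (m := 2) (n := 0) (by simp))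
  simpa [radv] using AddSubgroup.sub_mem _ (AddSubgroup.subset_closure h₂)
    (AddSubgroup.subset_closure h₀)

lemma mkQ_image_eq_of_subset {G : Submodule ℝ (V l)} {A R : Set (V l)} (hAR : A ⊆ R)
    (h : ∀ x ∈ R, ∃ y ∈ A, y - x ∈ G) : G.mkQ '' R = G.mkQ '' A := by
  refine Set.Subset.antisymm ?_ (Set.image_mono hAR)
  rintro _ ⟨x, hx, rfl⟩
  obtain ⟨y, hy, hyx⟩ := h x hx
  exact ⟨y, hy, (Submodule.Quotient.eq G).2 hyx⟩

lemma add_radv_sub_add_radv_mem_Ga (aa : V l) (m n : ℤ) :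
    aa + radv l 0 n - (aa + radv l m n) ∈ Ga l := by
  have : aa + radv l 0 n - (aa + radv l m n) = (-m : ℝ) • av l := by
    simp only [radv]
    module
  rw [this]
  exact Submodule.smul_mem _ _ (Submodule.mem_span_singleton_self _)

lemma mkQ_image_CvC2starS : (Ga l).mkQ '' CvC2starS l = (Ga l).mkQ '' Aff l .CvC := by
  refine mkQ_image_eq_of_subset (fun x hx => ?_) fun x hx => ?_
  · rcases mem_Aff_CvC.1 hx with ⟨aa, h, n, rfl⟩ | ⟨aa, h, n, rfl⟩ | ⟨aa, h, n, rfl⟩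
    · exact mem_CvC2starS.2 (Or.inl ⟨aa, h, 0, n, by simp, rfl⟩)
    · exact mem_CvC2starS.2 (Or.inr (Or.inl ⟨aa, h, 0, n, by simp⟩))
    · exact mem_CvC2starS.2 (Or.inr (Or.inr ⟨aa, h, 0, n, by simp⟩))
  · rcases mem_CvC2starS.1 hx with ⟨aa, h, m, n, -, rfl⟩ | ⟨aa, h, m, n, rfl⟩ | ⟨aa, h, m, n, rfl⟩
    · exact ⟨_, mem_Aff_CvC.2 (Or.inl ⟨aa, h, n, rfl⟩), add_radv_sub_add_radv_mem_Ga aa m n⟩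
    · exact ⟨_, mem_Aff_CvC.2 (Or.inr (Or.inl ⟨aa, h, n, rfl⟩)), add_radv_sub_add_radv_mem_Ga _ _ _⟩
    · exact ⟨_, mem_Aff_CvC.2 (Or.inr (Or.inr ⟨aa, h, n, rfl⟩)), add_radv_sub_add_radv_mem_Ga _ _ _⟩

lemma mkQ_image_CvC2starL : (Ga l).mkQ '' CvC2starL l = (Ga l).mkQ '' Aff l .CvC := by
  refine mkQ_image_eq_of_subset (fun x hx => ?_) fun x hx => ?_
  · rcases mem_Aff_CvC.1 hx with ⟨aa, h, n, rfl⟩ | ⟨aa, h, n, rfl⟩ | ⟨aa, h, n, rfl⟩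
    · exact mem_CvC2starL.2 (Or.inl ⟨aa, h, 0, n, rfl⟩)
    · exact mem_CvC2starL.2 (Or.inr (Or.inl ⟨aa, h, 0, n, by simp⟩))
    · exact mem_CvC2starL.2 (Or.inr (Or.inr ⟨aa, h, 0, n, by simp, by simp⟩))
  · rcases mem_CvC2starL.1 hx with ⟨aa, h, m, n, rfl⟩ | ⟨aa, h, m, n, rfl⟩ | ⟨aa, h, m, n, -, rfl⟩
    · exact ⟨_, mem_Aff_CvC.2 (Or.inl ⟨aa, h, n, rfl⟩), add_radv_sub_add_radv_mem_Ga aa m n⟩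
    · exact ⟨_, mem_Aff_CvC.2 (Or.inr (Or.inl ⟨aa, h, n, rfl⟩)), add_radv_sub_add_radv_mem_Ga _ _ _⟩
    · exact ⟨_, mem_Aff_CvC.2 (Or.inr (Or.inr ⟨aa, h, n, rfl⟩)), add_radv_sub_add_radv_mem_Ga _ _ _⟩

def DoublesMinimalRoots (l : ℕ) (R : Set (V l)) : Prop :=
  ∀ α ∈ R, (∀ β ∈ R, Iform l α α ≤ Iform l β β) → (2 : ℝ) • α ∈ R

lemma DoublesMinimalRoots.image {R : Set (V l)} {φ : V l ≃ₗ[ℝ] V l} {c : ℝ} (hc : 0 < c)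
    (hφ : IsSimilarity l φ c) (hR : DoublesMinimalRoots l R) : DoublesMinimalRoots l (φ '' R) := by
  rintro _ ⟨α, hα, rfl⟩ hmin
  refine ⟨(2 : ℝ) • α, hR α hα fun β hβ => ?_, map_smul φ 2 α⟩
  have := hmin (φ β) ⟨β, hβ, rfl⟩
  rw [hφ, hφ] at this
  exact le_of_mul_le_mul_left this hc

lemma doublesMinimalRoots_CvC2starS : DoublesMinimalRoots l (CvC2starS l) := by
  intro α hα hmin
  rcases mem_CvC2starS.1 hα with ⟨aa, h, m, n, -, rfl⟩ | ⟨aa, h, m, n, rfl⟩ | ⟨aa, h, m, n, rfl⟩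
  · refine mem_CvC2starS.2 (Or.inr (Or.inr ⟨_, mem_BCl_iff.2 ⟨aa, h, rfl⟩, m, n, ?_⟩))
    simp only [radv]
    push_cast
    module
  · have hαα := Iform_self_of_mem_BCm h
    obtain ⟨u, hu, v, -, -, rfl⟩ := mem_BCm_iff.1 h
    have := hmin u (BCs_subset_CvC2starS hu)
    rw [Iform_add_radv, hαα, Iform_self_of_mem_BCs hu] at this
    norm_num at this
  · have hαα := Iform_self_of_mem_BCl h
    obtain ⟨u, hu, rfl⟩ := mem_BCl_iff.1 h
    have := hmin u (BCs_subset_CvC2starS hu)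
    rw [Iform_add_radv, hαα, Iform_self_of_mem_BCs hu] at this
    norm_num at this

lemma not_doublesMinimalRoots_CvC2starL (hl : 1 ≤ l) :
    ¬ DoublesMinimalRoots l (CvC2starL l) := by
  intro h
  have hβ : εv l ⟨0, hl⟩ + radv l 1 1 ∈ CvC2starL l :=
    mem_CvC2starL.2 (Or.inl ⟨_, εv_mem_BCs _, 1, 1, rfl⟩)
  have h2β := h _ hβ fun γ hγ => by
    simpa using liesOverBC_CvC2starL.one_le_Iform_self hγ
  have hnorm : Iform l ((2 : ℝ) • (εv l ⟨0, hl⟩ + radv l 1 1))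
      ((2 : ℝ) • (εv l ⟨0, hl⟩ + radv l 1 1)) = 4 := by
    norm_num
  rcases mem_CvC2starL.1 h2β with ⟨aa, haa, m, n, he⟩ | ⟨aa, haa, m, n, he⟩ |
    ⟨aa, haa, m, n, hmn, he⟩
  · rw [he, Iform_add_radv, Iform_self_of_mem_BCs haa] at hnorm
    norm_num at hnorm
  · rw [he, Iform_add_radv, Iform_self_of_mem_BCm haa] at hnorm
    norm_num at hnorm
  · have hm : m = 1 := by
      simpa [apply_natAdd_of_mem_BCfull (Or.inr haa)] using (congrFun he (Fin.natAdd l 0)).symm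
    have hn : n = 1 := by
      simpa [apply_natAdd_of_mem_BCfull (Or.inr haa)] using (congrFun he (Fin.natAdd l 1)).symm
    norm_num [hm, hn] at hmn

lemma isERS_CvC2starS (hl : 1 ≤ l) : IsERS l (CvC2starS l) :=
  liesOverBC_CvC2starS.isERS hl (fun _ hα _ hx => reflV_mem_CvC2starS hα hx)
    BCs_add_Lset_subset_CvC2starS BCm_subset_CvC2starS

lemma isERS_CvC2starL (hl : 1 ≤ l) : IsERS l (CvC2starL l) :=
  liesOverBC_CvC2starL.isERS hl (fun _ hα _ hx => reflV_mem_CvC2starL hα hx)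
    BCs_add_Lset_subset_CvC2starL BCm_subset_CvC2starL

lemma isNonReducedRS_CvC2starS (hl : 1 ≤ l) : IsNonReducedRS l (CvC2starS l) :=
  ⟨εv l ⟨0, hl⟩, BCs_subset_CvC2starS (εv_mem_BCs _),
    mem_CvC2starS.2 (Or.inr (Or.inr ⟨_, two_smul_εv_mem_BCl ⟨0, hl⟩, 0, 0, by simp [radv]⟩))⟩

lemma isNonReducedRS_CvC2starL (hl : 1 ≤ l) : IsNonReducedRS l (CvC2starL l) :=
  ⟨εv l ⟨0, hl⟩, mem_CvC2starL.2 (Or.inl ⟨_, εv_mem_BCs ⟨0, hl⟩, 0, 0, by simp [radv]⟩),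
    mem_CvC2starL.2 (Or.inr (Or.inr
      ⟨_, two_smul_εv_mem_BCl ⟨0, hl⟩, 0, 0, by simp, by simp [radv]⟩))⟩

/-- **The systems `C^∨C_l^{(2)∗_s}` and `C^∨C_l^{(2)∗_l}` are genuinely distinct.** -/
theorem starS_starL_distinct {l : ℕ} (hl : 1 ≤ l) :
    (IsERS l (CvC2starS l) ∧ IsNonReducedRS l (CvC2starS l) ∧
      IsMarking l (CvC2starS l) (Ga l) ∧
      (Ga l).mkQ '' CvC2starS l = (Ga l).mkQ '' Aff l .CvC) ∧
    (IsERS l (CvC2starL l) ∧ IsNonReducedRS l (CvC2starL l) ∧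
      IsMarking l (CvC2starL l) (Ga l) ∧
      (Ga l).mkQ '' CvC2starL l = (Ga l).mkQ '' Aff l .CvC) ∧
    ¬ IsoRSa l (CvC2starS l) (CvC2starL l) := by
  refine ⟨⟨isERS_CvC2starS hl, isNonReducedRS_CvC2starS hl,
      isMarking_Ga_of_subset hl BCs_add_Lset_subset_CvC2starS, mkQ_image_CvC2starS⟩,
    ⟨isERS_CvC2starL hl, isNonReducedRS_CvC2starL hl,
      isMarking_Ga_of_subset hl BCs_add_Lset_subset_CvC2starL, mkQ_image_CvC2starL⟩, ?_⟩
  rintro ⟨φ, c, hc, hφ, -, hSL⟩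
  exact not_doublesMinimalRoots_CvC2starL hl (hSL ▸ doublesMinimalRoots_CvC2starS.image hc hφ)

end
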